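/- Let k((t)) = F and O = k[[t]]. Let L ⊂ Oⁿ be an O-lattice of colength d, and let T be the nilpotent endomorphism of the d-dimensional k-vector space V = Oⁿ/L induced by multiplication by t. Given positive integers d₁,…,d_r with d₁+⋯+d_r = d, the set of chains of lattices Oⁿ = L₀ ⊃ L₁ ⊃ ⋯ ⊃ L_r = L with dim_k(L_{i−1}/L_i) = d_i and inv(L_{i−1}, L_i) = (1^{d_i}, 0^{n−d_i}) is in natural bijection with the set of chains of subspaces V = V₀ ⊃ V₁ ⊃ ⋯ ⊃ V_r = 0 with dim(V_{i−1}/V_i) = d_i, each V_i stable under T, and T acting by zero on each quotient V_{i−1}/V_i. -/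

import Mathlib

/-!
STATEMENT 8.  `F = k((t))`, `O = k[[t]]`, `L ⊆ Oⁿ` a lattice of colength `d`,
`V = Oⁿ/L` with the nilpotent operator `T` induced by multiplication by `t`.
Chains of lattices `Oⁿ = L₀ ⊃ ⋯ ⊃ L_r = L` with `tL_{i-1} ⊆ L_i ⊆ L_{i-1}` and
`dim_k(L_{i-1}/L_i) = d_i` (i.e. `inv(L_{i-1},L_i) = (1^{d_i},0^{n-d_i})`)
are in natural bijection (via taking images in `V`) with chains of `T`-stable
subspaces `V = V₀ ⊃ ⋯ ⊃ V_r = 0` with `dim(V_{i-1}/V_i) = d_i` and `T` zero on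
each quotient `V_{i-1}/V_i`.
-/

noncomputable section
variable (k : Type*) [Field k]

local notation "O" => PowerSeries k
local notation "F" => LaurentSeries k

variable (n : ℕ)

/-- The standard lattice `Oⁿ ⊆ Fⁿ`. -/
def stdLattice : Submodule O (Fin n → F) :=
  Submodule.span O (Set.range fun i : Fin n => (Pi.single i 1 : Fin n → F))

/-- `k`-dimension of an `O`-module (via the algebra map `k → O = k[[t]]`). -/
def kDim (M : Type*) [AddCommGroup M] [Module O M] : ℕ :=
  letI : Module k M := Module.compHom M (algebraMap k O)
  Module.finrank k M

/-- `k`-dimension of the quotient `A/B` of two `O`-submodules. -/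
def colength {M : Type*} [AddCommGroup M] [Module O M]
    (A B : Submodule O M) : ℕ :=
  kDim k (↥A ⧸ Submodule.comap A.subtype B)

/-- Multiplication by `t` as an `O`-linear endomorphism. -/
def tMul (M : Type*) [AddCommGroup M] [Module O M] : M →ₗ[O] M :=
  LinearMap.lsmul O M PowerSeries.X

/-! ### Auxiliary lemmas -/

/-- Every `O`-submodule is stable under multiplication by `t`. -/
lemma tMul_map_le {M : Type*} [AddCommGroup M] [Module O M] (p : Submodule O M) :
    Submodule.map (tMul k M) p ≤ p := by
  rintro x ⟨y, hy, rfl⟩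
  exact p.smul_mem _ hy

lemma kDim_congr {M N : Type*} [AddCommGroup M] [Module O M]
    [AddCommGroup N] [Module O N] (e : M ≃ₗ[O] N) : kDim k M = kDim k N := by
  unfold kDim
  letI : Module k M := Module.compHom M (algebraMap k O)
  letI : Module k N := Module.compHom N (algebraMap k O)
  exact LinearEquiv.finrank_eq
    { e.toAddEquiv with
      map_smul' := fun c x => e.map_smul (algebraMap k O c) x }

/-- A decreasing chain is bounded above by its first term. -/
lemma chain_le_first {α : Type*} [Preorder α] {r : ℕ} {f : Fin (r + 1) → α}
    (h : ∀ i : Fin r, f i.succ ≤ f i.castSucc) : ∀ j, f j ≤ f 0 := by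
  intro j
  induction j using Fin.induction with
  | zero => exact le_refl _
  | succ i ih => exact le_trans (h i) ih

/-- A decreasing chain is bounded below by its last term. -/
lemma last_le_chain {α : Type*} [Preorder α] {r : ℕ} {f : Fin (r + 1) → α}
    (h : ∀ i : Fin r, f i.succ ≤ f i.castSucc) : ∀ j, f (Fin.last r) ≤ f j := by
  intro j
  induction j using Fin.reverseInduction with
  | last => exact le_refl _
  | cast i ih => exact le_trans ih (h i)

lemma preSub_imgSub {n : ℕ} {L : Submodule O (Fin n → F)}
    {V : Type*} [AddCommGroup V] [Module (PowerSeries k) V]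
    {π : ↥(stdLattice k n) →ₗ[O] V}
    (hπker : LinearMap.ker π = Submodule.comap (stdLattice k n).subtype L)
    {A : Submodule O (Fin n → F)} (hLA : L ≤ A) (hA : A ≤ stdLattice k n) :
    Submodule.map (stdLattice k n).subtype
      (Submodule.comap π
        (Submodule.map π (Submodule.comap (stdLattice k n).subtype A))) = A := by
  have h1 : Submodule.comap π (Submodule.map π (Submodule.comap (stdLattice k n).subtype A))
      = Submodule.comap (stdLattice k n).subtype A ⊔ LinearMap.ker π :=
    Submodule.comap_map_eq π _
  rw [h1, hπker,
    sup_eq_left.mpr (Submodule.comap_mono hLA), Submodule.map_comap_subtype,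
    inf_eq_right.mpr hA]

lemma imgSub_preSub {n : ℕ} {L : Submodule O (Fin n → F)}
    {V : Type*} [AddCommGroup V] [Module (PowerSeries k) V]
    {π : ↥(stdLattice k n) →ₗ[O] V}
    (hπsurj : Function.Surjective π) (q : Submodule O V) :
    Submodule.map π
      (Submodule.comap (stdLattice k n).subtype
        (Submodule.map (stdLattice k n).subtype (Submodule.comap π q))) = q := by
  have h1 : Submodule.comap (stdLattice k n).subtype
        (Submodule.map (stdLattice k n).subtype (Submodule.comap π q))
      = Submodule.comap π q ⊔ LinearMap.ker (stdLattice k n).subtype :=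
    Submodule.comap_map_eq ((stdLattice k n).subtype) _
  rw [h1, Submodule.ker_subtype, sup_bot_eq,
    Submodule.map_comap_eq_of_surjective hπsurj]

lemma le_preSub {n : ℕ} {L : Submodule O (Fin n → F)}
    {V : Type*} [AddCommGroup V] [Module (PowerSeries k) V]
    {π : ↥(stdLattice k n) →ₗ[O] V}
    (hπker : LinearMap.ker π = Submodule.comap (stdLattice k n).subtype L)
    (hLstd : L ≤ stdLattice k n) (q : Submodule O V) :
    L ≤ Submodule.map (stdLattice k n).subtype (Submodule.comap π q) := by
  intro x hx
  refine ⟨⟨x, hLstd hx⟩, ?_, rfl⟩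
  have h : (⟨x, hLstd hx⟩ : ↥(stdLattice k n)) ∈ LinearMap.ker π := by
    rw [hπker]; exact hx
  show π _ ∈ q
  rw [LinearMap.mem_ker.mp h]
  exact q.zero_mem

lemma preSub_le_std {n : ℕ} {L : Submodule O (Fin n → F)}
    {V : Type*} [AddCommGroup V] [Module (PowerSeries k) V]
    {π : ↥(stdLattice k n) →ₗ[O] V} (q : Submodule O V) :
    Submodule.map (stdLattice k n).subtype (Submodule.comap π q) ≤ stdLattice k n := by
  rintro x ⟨y, _, rfl⟩
  exact y.2

/-- Compatibility of the correspondence with multiplication by `t`, forward. -/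
lemma imgSub_tMul {n : ℕ} {L : Submodule O (Fin n → F)}
    {V : Type*} [AddCommGroup V] [Module (PowerSeries k) V]
    {π : ↥(stdLattice k n) →ₗ[O] V} {A B : Submodule O (Fin n → F)}
    (hAB : Submodule.map (tMul k (Fin n → F)) A ≤ B) :
    Submodule.map (tMul k V)
        (Submodule.map π (Submodule.comap (stdLattice k n).subtype A)) ≤
      Submodule.map π (Submodule.comap (stdLattice k n).subtype B) := by
  letI : SMul O ↥(stdLattice k n) :=
    (inferInstance : Module O ↥(stdLattice k n)).toDistribMulAction.toMulAction.toSMul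
  rintro x ⟨y, ⟨z, hz, rfl⟩, rfl⟩
  refine ⟨(PowerSeries.X : O) • z, ?_, ?_⟩
  · show ((PowerSeries.X : O) • z : ↥(stdLattice k n)).1 ∈ B
    refine hAB ⟨(z : Fin n → F), hz, ?_⟩
    rfl
  · show π ((PowerSeries.X : O) • z) = (tMul k V) (π z)
    exact π.map_smul _ z

/-- Compatibility of the correspondence with multiplication by `t`, backward. -/
lemma tMul_of_imgSub {n : ℕ} {L : Submodule O (Fin n → F)}
    {V : Type*} [AddCommGroup V] [Module (PowerSeries k) V]
    {π : ↥(stdLattice k n) →ₗ[O] V}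
    (hπker : LinearMap.ker π = Submodule.comap (stdLattice k n).subtype L)
    {A B : Submodule O (Fin n → F)} (hA : A ≤ stdLattice k n) (hLB : L ≤ B)
    (hAB : Submodule.map (tMul k V)
        (Submodule.map π (Submodule.comap (stdLattice k n).subtype A)) ≤
      Submodule.map π (Submodule.comap (stdLattice k n).subtype B)) :
    Submodule.map (tMul k (Fin n → F)) A ≤ B := by
  letI : SMul O ↥(stdLattice k n) :=
    (inferInstance : Module O ↥(stdLattice k n)).toDistribMulAction.toMulAction.toSMul
  rintro x ⟨y, hy, rfl⟩
  show (tMul k (Fin n → F)) y ∈ B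
  simp only [tMul, LinearMap.lsmul_apply]
  set y' : ↥(stdLattice k n) := ⟨y, hA hy⟩ with hy'
  have h1 : (PowerSeries.X : O) • π y' ∈
      Submodule.map π (Submodule.comap (stdLattice k n).subtype B) :=
    hAB ⟨π y', ⟨y', hy, rfl⟩, rfl⟩
  obtain ⟨z, hzB, hz⟩ := h1
  have h2 : (PowerSeries.X : O) • y' - z ∈ LinearMap.ker π := by
    have e1 : π ((PowerSeries.X : O) • y' - z)
        = π ((PowerSeries.X : O) • y') - π z := map_sub π _ _
    have e2 : π ((PowerSeries.X : O) • y') = (PowerSeries.X : O) • π y' :=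
      π.map_smul _ _
    rw [LinearMap.mem_ker, e1, e2, hz, sub_self]
  rw [hπker] at h2
  have h3 : ((PowerSeries.X : O) • y' - z : ↥(stdLattice k n)).1 ∈ B := hLB h2
  have h5 := B.add_mem h3 hzB
  have h4 : (((PowerSeries.X : O) • y' - z : ↥(stdLattice k n)) : Fin n → F)
      = (PowerSeries.X : O) • y - (z : Fin n → F) := rfl
  rw [h4] at h5
  show (PowerSeries.X : O) • y ∈ B
  simpa using h5

/-- The key colength comparison. -/
lemma colength_imgSub {n : ℕ} {L : Submodule O (Fin n → F)}
    {V : Type*} [AddCommGroup V] [Module (PowerSeries k) V]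
    {π : ↥(stdLattice k n) →ₗ[O] V}
    (hπsurj : Function.Surjective π)
    (hπker : LinearMap.ker π = Submodule.comap (stdLattice k n).subtype L)
    {A B : Submodule O (Fin n → F)} (hA : A ≤ stdLattice k n) (hBA : B ≤ A) (hLB : L ≤ B) :
    colength k (Submodule.map π (Submodule.comap (stdLattice k n).subtype A))
        (Submodule.map π (Submodule.comap (stdLattice k n).subtype B)) =
      colength k A B := by
  set VA := Submodule.map π (Submodule.comap (stdLattice k n).subtype A) with hVA
  set VB := Submodule.map π (Submodule.comap (stdLattice k n).subtype B) with hVB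
  have hB : B ≤ stdLattice k n := le_trans hBA hA
  set f : ↥A →ₗ[O] V := π.comp (Submodule.inclusion hA) with hf
  have hrange : LinearMap.range f = VA := by
    rw [hf, LinearMap.range_comp, Submodule.range_inclusion, hVA]
  set f' : ↥A →ₗ[O] ↥VA := f.codRestrict VA (fun x => hrange ▸ LinearMap.mem_range_self f x)
    with hf'
  set g : ↥A →ₗ[O] (↥VA ⧸ Submodule.comap VA.subtype VB) :=
    (Submodule.comap VA.subtype VB).mkQ.comp f' with hg
  have hgsurj : Function.Surjective g := by
    apply Function.Surjective.comp (Submodule.mkQ_surjective _)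
    rintro ⟨v, hv⟩
    rw [← hrange] at hv
    obtain ⟨x, hx⟩ := hv
    exact ⟨x, Subtype.ext hx⟩
  have hker : LinearMap.ker g = Submodule.comap A.subtype B := by
    ext x
    constructor
    · intro hx
      have hfx : f x ∈ VB := by
        have h0 : f' x ∈ Submodule.comap VA.subtype VB := by
          have := (Submodule.Quotient.mk_eq_zero _).mp hx
          exact this
        exact h0
      obtain ⟨z, hzB, hz⟩ := hfx
      have h2 : Submodule.inclusion hA x - z ∈ LinearMap.ker π := by
        have e1 : π (Submodule.inclusion hA x - z)
            = π (Submodule.inclusion hA x) - π z := map_sub π _ _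
        rw [LinearMap.mem_ker, e1, hz]
        simp [hf]
      rw [hπker] at h2
      have h3 : (Submodule.inclusion hA x - z : ↥(stdLattice k n)).1 ∈ B := hLB h2
      have h5 := B.add_mem h3 hzB
      have h4 : ((Submodule.inclusion hA x - z : ↥(stdLattice k n)) : Fin n → F)
          = (x : Fin n → F) - (z : Fin n → F) := rfl
      rw [h4] at h5
      show (x : Fin n → F) ∈ B
      simpa using h5
    · intro hx
      have hfx : f' x ∈ Submodule.comap VA.subtype VB := by
        show f x ∈ VB
        exact ⟨Submodule.inclusion hA x, hx, rfl⟩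
      show g x = 0
      rw [hg]
      exact (Submodule.Quotient.mk_eq_zero _).mpr hfx
  have e := g.quotKerEquivOfSurjective hgsurj
  rw [hker] at e
  unfold colength
  exact (kDim_congr k e).symm

theorem lattice_chains_biject_with_springer_flags
    (r : ℕ) (d : Fin r → ℕ) (hd : ∀ i, 0 < d i)
    (L : Submodule O (Fin n → F)) (hLfg : L.FG)
    (hLspan : Submodule.span F (L : Set (Fin n → F)) = ⊤)
    (hLstd : L ≤ stdLattice k n)
    (hcolength : colength k (stdLattice k n) L = ∑ i, d i)
    -- `V` is (any realization of) the quotient `Oⁿ/L`, with projection `π`;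
    -- `T = tMul k V` is the operator induced by multiplication by `t`
    (V : Type*) [AddCommGroup V] [Module (PowerSeries k) V]
    (π : ↥(stdLattice k n) →ₗ[O] V)
    (hπsurj : Function.Surjective π)
    (hπker : LinearMap.ker π = Submodule.comap (stdLattice k n).subtype L) :
    Set.BijOn
      -- the natural map: send a chain of lattices to its chain of images in `V`
      (fun (Lc : Fin (r + 1) → Submodule O (Fin n → F)) (i : Fin (r + 1)) =>
        Submodule.map π (Submodule.comap (stdLattice k n).subtype (Lc i)))
      -- chains of lattices `Oⁿ = L₀ ⊇ ⋯ ⊇ L_r = L` with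
      -- `inv(L_{i-1}, L_i) = (1^{d_i}, 0^{n-d_i})`
      {Lc : Fin (r + 1) → Submodule O (Fin n → F) |
        Lc 0 = stdLattice k n ∧ Lc (Fin.last r) = L ∧
        ∀ i : Fin r,
          Submodule.map (tMul k (Fin n → F)) (Lc i.castSucc) ≤ Lc i.succ ∧
          Lc i.succ ≤ Lc i.castSucc ∧
          colength k (Lc i.castSucc) (Lc i.succ) = d i}
      -- chains of `T`-stable subspaces of `V` with `T` zero on the quotients
      {Vc : Fin (r + 1) → Submodule O V |
        Vc 0 = ⊤ ∧ Vc (Fin.last r) = ⊥ ∧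
        (∀ j : Fin (r + 1), Submodule.map (tMul k V) (Vc j) ≤ Vc j) ∧
        ∀ i : Fin r,
          Vc i.succ ≤ Vc i.castSucc ∧
          Submodule.map (tMul k V) (Vc i.castSucc) ≤ Vc i.succ ∧
          colength k (Vc i.castSucc) (Vc i.succ) = d i} := by
  constructor
  · -- MapsTo
    rintro Lc ⟨h0, hlast, hchain⟩
    have hdec : ∀ i : Fin r, Lc i.succ ≤ Lc i.castSucc := fun i => (hchain i).2.1
    have hub : ∀ j, Lc j ≤ stdLattice k n := fun j => h0 ▸ chain_le_first hdec j
    have hlb : ∀ j, L ≤ Lc j := fun j => hlast ▸ last_le_chain hdec j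
    simp only [Set.mem_setOf_eq]
    refine ⟨?_, ?_, fun j => tMul_map_le k _, fun i => ⟨?_, ?_, ?_⟩⟩
    · rw [h0]
      have hc : Submodule.comap (stdLattice k n).subtype (stdLattice k n) = ⊤ :=
        eq_top_iff.mpr fun x _ => x.2
      rw [hc, Submodule.map_top, LinearMap.range_eq_top.mpr hπsurj]
    · rw [hlast, ← hπker]
      refine (Submodule.eq_bot_iff _).mpr ?_
      rintro v ⟨y, hy, rfl⟩
      exact LinearMap.mem_ker.mp hy
    · exact Submodule.map_mono (Submodule.comap_mono (hchain i).2.1)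
    · exact imgSub_tMul k (L := L) (hchain i).1
    · rw [colength_imgSub k hπsurj hπker (hub i.castSucc) (hchain i).2.1 (hlb i.succ)]
      exact (hchain i).2.2
  constructor
  · -- InjOn
    rintro Lc ⟨h0, hlast, hchain⟩ Lc' ⟨h0', hlast', hchain'⟩ heq
    have hdec : ∀ i : Fin r, Lc i.succ ≤ Lc i.castSucc := fun i => (hchain i).2.1
    have hdec' : ∀ i : Fin r, Lc' i.succ ≤ Lc' i.castSucc := fun i => (hchain' i).2.1
    funext j
    calc Lc j
        = Submodule.map (stdLattice k n).subtype
            (Submodule.comap π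
              (Submodule.map π
                (Submodule.comap (stdLattice k n).subtype (Lc j)))) :=
          (preSub_imgSub k hπker (hlast ▸ last_le_chain hdec j)
            (h0 ▸ chain_le_first hdec j)).symm
      _ = Submodule.map (stdLattice k n).subtype
            (Submodule.comap π
              (Submodule.map π
                (Submodule.comap (stdLattice k n).subtype (Lc' j)))) :=
          congrArg (fun q => Submodule.map (stdLattice k n).subtype
            (Submodule.comap π q)) (congrFun heq j)
      _ = Lc' j :=
          preSub_imgSub k hπker (hlast' ▸ last_le_chain hdec' j)
            (h0' ▸ chain_le_first hdec' j)
  · -- SurjOn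
    rintro Vc ⟨h0, hlast, hstab, hchain⟩
    set Lc : Fin (r + 1) → Submodule O (Fin n → F) :=
      fun i => Submodule.map (stdLattice k n).subtype (Submodule.comap π (Vc i)) with hLc
    have hfeq : ∀ j, Submodule.map π (Submodule.comap (stdLattice k n).subtype (Lc j))
        = Vc j := fun j => imgSub_preSub k (L := L) hπsurj (Vc j)
    refine ⟨Lc, ⟨?_, ?_, fun i => ⟨?_, ?_, ?_⟩⟩, funext fun j => hfeq j⟩
    · show Submodule.map (stdLattice k n).subtype (Submodule.comap π (Vc 0))
        = stdLattice k n
      rw [h0, Submodule.comap_top, Submodule.map_top, Submodule.range_subtype]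
    · show Submodule.map (stdLattice k n).subtype (Submodule.comap π (Vc (Fin.last r))) = L
      have hk : Submodule.comap π (⊥ : Submodule O V) = LinearMap.ker π := rfl
      rw [hlast, hk, hπker, Submodule.map_comap_subtype, inf_eq_right.mpr hLstd]
    · refine tMul_of_imgSub k hπker (preSub_le_std k (L := L) _) (le_preSub k hπker hLstd _) ?_
      rw [hfeq i.castSucc, hfeq i.succ]
      exact (hchain i).2.1
    · exact Submodule.map_mono (Submodule.comap_mono (hchain i).1)
    · rw [← colength_imgSub k hπsurj hπker (preSub_le_std k (L := L) _)
        (Submodule.map_mono (Submodule.comap_mono (hchain i).1))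
        (le_preSub k hπker hLstd _), hfeq i.castSucc, hfeq i.succ]
      exact (hchain i).2.2

end
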